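/- arXiv:0909.0440 — 5 statements merged into one kernel-verified Lean document; each statement's English description precedes it below -/
import Mathlib

section
/- Every two-sided ideal K of E(R,I) has the form K = {(a, -j) : a ∈ A, j ∈ J, a + Z = φ(j)}, where Z ⊆ A are ideals of R, J is an R-subrng of I, and φ: J → A/Z is a surjective R-homomorphism such that for all (a,-j) ∈ K and i ∈ I one has ai - ji ∈ ker(φ) and ia - ij ∈ ker(φ). Conversely, any set of this form with such data is an ideal of E(R,I). -/
open MulOpposite

/-- The underlying type of the Dorroh (ideal) extension `E(R,I)`. -/
@[ext]
structure Dorroh (R : Type*) (I : Type*) where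
  fst : R
  snd : I

/-- `I` is an `R`-rng: a nonunital ring with a compatible `(R,R)`-bimodule structure. -/
class IsRRng (R I : Type*) [Ring R] [NonUnitalRing I] [Module R I] [Module Rᵐᵒᵖ I] : Prop where
  smul_op_smul : ∀ (r : R) (s : Rᵐᵒᵖ) (x : I), r • s • x = s • r • x
  smul_mul : ∀ (r : R) (x y : I), r • (x * y) = (r • x) * y
  mul_smul_eq : ∀ (r : R) (x y : I), x * (r • y) = (op r • x) * y
  op_smul_mul : ∀ (r : R) (x y : I), op r • (x * y) = x * (op r • y)

namespace Dorroh

variable {R I : Type*} [Ring R] [NonUnitalRing I] [Module R I] [Module Rᵐᵒᵖ I] [IsRRng R I]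

instance : Add (Dorroh R I) := ⟨fun p q => ⟨p.fst + q.fst, p.snd + q.snd⟩⟩
instance : Zero (Dorroh R I) := ⟨⟨0, 0⟩⟩
instance : Neg (Dorroh R I) := ⟨fun p => ⟨-p.fst, -p.snd⟩⟩
instance : Mul (Dorroh R I) :=
  ⟨fun p q => ⟨p.fst * q.fst, op q.fst • p.snd + p.fst • q.snd + p.snd * q.snd⟩⟩
instance : One (Dorroh R I) := ⟨⟨1, 0⟩⟩

set_option linter.unusedSectionVars false

@[simp] theorem add_fst (p q : Dorroh R I) : (p + q).fst = p.fst + q.fst := rfl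
@[simp] theorem add_snd (p q : Dorroh R I) : (p + q).snd = p.snd + q.snd := rfl
@[simp] theorem zero_fst : (0 : Dorroh R I).fst = 0 := rfl
@[simp] theorem zero_snd : (0 : Dorroh R I).snd = 0 := rfl
@[simp] theorem neg_fst (p : Dorroh R I) : (-p).fst = -p.fst := rfl
@[simp] theorem neg_snd (p : Dorroh R I) : (-p).snd = -p.snd := rfl
@[simp] theorem mul_fst (p q : Dorroh R I) : (p * q).fst = p.fst * q.fst := rfl
@[simp] theorem mul_snd (p q : Dorroh R I) :
    (p * q).snd = op q.fst • p.snd + p.fst • q.snd + p.snd * q.snd := rfl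
@[simp] theorem one_fst : (1 : Dorroh R I).fst = 1 := rfl
@[simp] theorem one_snd : (1 : Dorroh R I).snd = 0 := rfl

instance : Ring (Dorroh R I) where
  add_assoc a b c := by ext <;> simp [add_assoc]
  zero_add a := by ext <;> simp
  add_zero a := by ext <;> simp
  add_comm a b := by ext <;> simp [add_comm]
  neg_add_cancel a := by ext <;> simp
  mul_assoc a b c := by
    ext
    · simp [mul_assoc]
    · simp only [mul_snd, mul_fst, smul_add, mul_smul, op_mul, mul_add, add_mul,
        IsRRng.smul_mul, IsRRng.op_smul_mul, IsRRng.smul_op_smul, mul_assoc]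
      rw [← IsRRng.mul_smul_eq]
      abel
  one_mul a := by ext <;> simp
  mul_one a := by ext <;> simp
  left_distrib a b c := by
    ext
    · simp [mul_add]
    · simp [op_add, add_smul, smul_add, mul_add]
      abel
  right_distrib a b c := by
    ext
    · simp [add_mul]
    · simp [op_add, add_smul, smul_add, add_mul]
      abel
  zero_mul a := by ext <;> simp
  mul_zero a := by ext <;> simp
  nsmul := nsmulRec
  zsmul := zsmulRec

theorem mul_def (p q : Dorroh R I) :
    p * q = ⟨p.fst * q.fst, op q.fst • p.snd + p.fst • q.snd + p.snd * q.snd⟩ := rfl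

theorem one_def : (1 : Dorroh R I) = ⟨1, 0⟩ := rfl

theorem add_def (p q : Dorroh R I) : p + q = ⟨p.fst + q.fst, p.snd + q.snd⟩ := rfl

end Dorroh

/-- An `R`-subrng of the `R`-rng `I`: an `(R,R)`-subbimodule closed under multiplication. -/
def IsRSubrng (R : Type*) {I : Type*} [Ring R] [NonUnitalRing I] [Module R I]
    [Module Rᵐᵒᵖ I] (J : Set I) : Prop :=
  (0 : I) ∈ J ∧ (∀ x ∈ J, ∀ y ∈ J, x + y ∈ J) ∧ (∀ x ∈ J, -x ∈ J) ∧
    (∀ x ∈ J, ∀ y ∈ J, x * y ∈ J) ∧ (∀ (r : R), ∀ x ∈ J, r • x ∈ J) ∧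
    (∀ (r : R), ∀ x ∈ J, op r • x ∈ J)

/-- An `R`-ideal of the `R`-rng `I`: an `(R,R)`-subbimodule that is an ideal of `I`. -/
def IsRIdeal (R : Type*) {I : Type*} [Ring R] [NonUnitalRing I] [Module R I]
    [Module Rᵐᵒᵖ I] (J : Set I) : Prop :=
  IsRSubrng R J ∧ ∀ (i : I), ∀ j ∈ J, i * j ∈ J ∧ j * i ∈ J

/-- The annihilator `ann_R(I) = {r : R | rI = Ir = 0}`. -/
def annR (R I : Type*) [Ring R] [NonUnitalRing I] [Module R I] [Module Rᵐᵒᵖ I] : Set R :=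
  {r : R | ∀ x : I, r • x = 0 ∧ op r • x = 0}

/-- An element `x` of a rng is left quasi-regular if `x + k + kx = 0` for some `k`. -/
def IsLQR {I : Type*} [NonUnitalRing I] (x : I) : Prop := ∃ k : I, x + k + k * x = 0

/-- The Jacobson radical of a rng. -/
def rngRad (I : Type*) [NonUnitalRing I] : Set I := {x : I | ∀ j : I, IsLQR (j * x)}

/-- `npowNZ x n = x ^ (n+1)` in a nonunital ring. -/
def npowNZ {I : Type*} [NonUnitalRing I] (x : I) : ℕ → I
  | 0 => x
  | n + 1 => npowNZ x n * x

/-- An element of a rng is nilpotent if some positive power of it is zero. -/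
def IsNilElem {I : Type*} [NonUnitalRing I] (x : I) : Prop := ∃ n : ℕ, npowNZ x n = 0

/-- A subset of a rng is nil if each of its elements is nilpotent. -/
def SetIsNil {I : Type*} [NonUnitalRing I] (S : Set I) : Prop := ∀ x ∈ S, IsNilElem x

/-- A subset of a rng is nilpotent if for some `n` every product of `n+1` of its
elements vanishes. -/
def SetIsNilpotent {I : Type*} [NonUnitalRing I] (S : Set I) : Prop :=
  ∃ n : ℕ, ∀ (x : I) (l : List I), x ∈ S → (∀ y ∈ l, y ∈ S) → l.length = n →
    l.foldl (· * ·) x = 0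

/-- The upper nil radical of a rng: the sum of all of its nil (two-sided) ideals. -/
def upperNil (I : Type*) [NonUnitalRing I] : Set I :=
  ((sSup {J : TwoSidedIdeal I | ∀ x ∈ J, IsNilElem x} : TwoSidedIdeal I) : Set I)

/-- A rng is semiprime if it has no nonzero ideal of square zero. -/
def IsSemiprimeRng (I : Type*) [NonUnitalRing I] : Prop :=
  ∀ J : TwoSidedIdeal I, (∀ x ∈ J, ∀ y ∈ J, x * y = 0) → J = ⊥

/-- A rng is prime if the product of any two nonzero ideals is nonzero. -/
def IsPrimeRng (I : Type*) [NonUnitalRing I] : Prop :=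
  ∀ J K : TwoSidedIdeal I, (∀ x ∈ J, ∀ y ∈ K, x * y = 0) → J = ⊥ ∨ K = ⊥

/-- `ψ : I → R` restricts to an `R`-homomorphism on the subset `J ⊆ I`. -/
def IsRHomOn (R : Type*) {I : Type*} [Ring R] [NonUnitalRing I] [Module R I]
    [Module Rᵐᵒᵖ I] (J : Set I) (ψ : I → R) : Prop :=
  (∀ x ∈ J, ∀ y ∈ J, ψ (x + y) = ψ x + ψ y) ∧
    (∀ x ∈ J, ∀ y ∈ J, ψ (x * y) = ψ x * ψ y) ∧
    (∀ (r : R), ∀ x ∈ J, ψ (r • x) = r * ψ x) ∧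
    (∀ (r : R), ∀ x ∈ J, ψ (op r • x) = ψ x * r)

/-- `φ : I → R` is an `R`-homomorphism. -/
def IsRHom (R : Type*) {I : Type*} [Ring R] [NonUnitalRing I] [Module R I]
    [Module Rᵐᵒᵖ I] (φ : I → R) : Prop :=
  (∀ x y : I, φ (x + y) = φ x + φ y) ∧ (∀ x y : I, φ (x * y) = φ x * φ y) ∧
    (∀ (r : R) (x : I), φ (r • x) = r * φ x) ∧ (∀ (r : R) (x : I), φ (op r • x) = φ x * r)

/-- A two-sided ideal `P` of a ring is prime if `AB ⊆ P` implies `A ⊆ P` or `B ⊆ P`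
for all two-sided ideals `A`, `B`. -/
def TsiPrime {S : Type*} [Ring S] (P : TwoSidedIdeal S) : Prop :=
  ∀ A B : TwoSidedIdeal S, (∀ a ∈ A, ∀ b ∈ B, a * b ∈ P) → A ≤ P ∨ B ≤ P

/-- A two-sided ideal is maximal if it is a maximal proper ideal. -/
def TsiMaximal {S : Type*} [Ring S] (P : TwoSidedIdeal S) : Prop :=
  P ≠ ⊤ ∧ ∀ Q : TwoSidedIdeal S, P ≤ Q → Q = P ∨ Q = ⊤

/-- A two-sided-ideal subset of a ring. -/
def IsTwoSidedIdealSet (R : Type*) [Ring R] (P : Set R) : Prop :=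
  (0 : R) ∈ P ∧ (∀ x ∈ P, ∀ y ∈ P, x + y ∈ P) ∧ (∀ x ∈ P, -x ∈ P) ∧
    (∀ (r : R), ∀ x ∈ P, r * x ∈ P ∧ x * r ∈ P)

/-- A subset `P` of `R` is a prime ideal if it is a two-sided ideal and `AB ⊆ P`
implies `A ⊆ P` or `B ⊆ P` for all two-sided ideals `A, B`. -/
def IsPrimeIdealSet (R : Type*) [Ring R] (P : Set R) : Prop :=
  IsTwoSidedIdealSet R P ∧ ∀ A B : TwoSidedIdeal R,
    (∀ a ∈ A, ∀ b ∈ B, a * b ∈ P) → ((A : Set R) ⊆ P ∨ (B : Set R) ⊆ P)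

/-- A subset `P` of `R` is a semiprime ideal if it is a two-sided ideal and `A² ⊆ P`
implies `A ⊆ P` for all two-sided ideals `A`. -/
def IsSemiprimeIdealSet (R : Type*) [Ring R] (P : Set R) : Prop :=
  IsTwoSidedIdealSet R P ∧ ∀ A : TwoSidedIdeal R,
    (∀ a ∈ A, ∀ b ∈ A, a * b ∈ P) → (A : Set R) ⊆ P

section IdealData

variable (R I : Type*) [Ring R] [NonUnitalRing I] [Module R I] [Module Rᵐᵒᵖ I] [IsRRng R I]

/-- The data describing an ideal of `E(R,I)`: ideals `Z ⊆ A` of `R`, an `R`-subrng `J ⊆ I`,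
and a surjective `R`-homomorphism `φ : J → A/Z` (represented by a set-map `ψ : I → R`
choosing representatives), satisfying conditions (a) `ai - ji ∈ ker φ` and
(b) `ia - ij ∈ ker φ` for all `(a,-j) ∈ K`, `i ∈ I`. -/
def DorrohIdealData (A Z : TwoSidedIdeal R) (J : Set I) (ψ : I → R) : Prop :=
  Z ≤ A ∧ IsRSubrng R J ∧
    (∀ x ∈ J, ∀ y ∈ J, ψ (x + y) - (ψ x + ψ y) ∈ Z) ∧
    (∀ x ∈ J, ∀ y ∈ J, ψ (x * y) - ψ x * ψ y ∈ Z) ∧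
    (∀ (r : R), ∀ x ∈ J, ψ (r • x) - r * ψ x ∈ Z) ∧
    (∀ (r : R), ∀ x ∈ J, ψ (op r • x) - ψ x * r ∈ Z) ∧
    (∀ j ∈ J, ψ j ∈ A) ∧
    (∀ a ∈ A, ∃ j ∈ J, a - ψ j ∈ Z) ∧
    (∀ (a : R), ∀ j ∈ J, a ∈ A → a - ψ j ∈ Z → ∀ i : I,
      (a • i - j * i ∈ J ∧ ψ (a • i - j * i) ∈ Z) ∧
      (op a • i - i * j ∈ J ∧ ψ (op a • i - i * j) ∈ Z))

/-- The subset `K = {(a, -j) : a ∈ A, j ∈ J, a + Z = φ(j)}` of `E(R,I)`. -/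
def DorrohIdealSet (A Z : TwoSidedIdeal R) (J : Set I) (ψ : I → R) : Set (Dorroh R I) :=
  {p : Dorroh R I | p.fst ∈ A ∧ -p.snd ∈ J ∧ p.fst - ψ (-p.snd) ∈ Z}

end IdealData

variable (R I : Type*) [Ring R] [NonUnitalRing I] [Module R I] [Module Rᵐᵒᵖ I] [IsRRng R I]

open MulOpposite


section DorrohAux

open MulOpposite Dorroh

variable {S T : Type*} [Ring S] [NonUnitalRing T] [Module S T] [Module Sᵐᵒᵖ T] [IsRRng S T]

variable (K : TwoSidedIdeal (Dorroh S T))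

/-- The set `J` associated to an ideal `K` of `E(R,I)`. -/
def Jset : Set T := {j | ∃ a : S, (⟨a, -j⟩ : Dorroh S T) ∈ K}

open Classical in
/-- A choice of representative `ψ j` with `(ψ j, -j) ∈ K`. -/
noncomputable def psiK (j : T) : S :=
  if h : ∃ a : S, (⟨a, -j⟩ : Dorroh S T) ∈ K then h.choose else 0

lemma psiK_mem {j : T} (hj : j ∈ Jset K) : (⟨psiK K j, -j⟩ : Dorroh S T) ∈ K := by
  have hj' : ∃ a : S, (⟨a, -j⟩ : Dorroh S T) ∈ K := hj
  unfold psiK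
  rw [dif_pos hj']
  exact hj'.choose_spec

lemma memK_congr {p q : Dorroh S T} (h : p ∈ K) (e : q = p) : q ∈ K := e ▸ h

/-- The ideal `A` of `R` associated to `K`. -/
def Atsi : TwoSidedIdeal S :=
  TwoSidedIdeal.mk' {a | ∃ i : T, (⟨a, i⟩ : Dorroh S T) ∈ K}
    ⟨0, K.zero_mem⟩
    (fun hx hy => ⟨hx.choose + hy.choose, K.add_mem hx.choose_spec hy.choose_spec⟩)
    (fun hx => ⟨-hx.choose, K.neg_mem hx.choose_spec⟩)
    (fun {x y} hy => ⟨x • hy.choose, by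
      have h := K.mul_mem_left ⟨x, 0⟩ _ hy.choose_spec
      refine memK_congr K h ?_
      ext <;> simp⟩)
    (fun {x y} hx => ⟨op y • hx.choose, by
      have h := K.mul_mem_right _ ⟨y, 0⟩ hx.choose_spec
      refine memK_congr K h ?_
      ext <;> simp⟩)

lemma mem_Atsi {a : S} : a ∈ Atsi K ↔ ∃ i : T, (⟨a, i⟩ : Dorroh S T) ∈ K :=
  TwoSidedIdeal.mem_mk' _ _ _ _ _ _ _

/-- The ideal `Z` of `R` associated to `K`. -/
def Ztsi : TwoSidedIdeal S :=
  TwoSidedIdeal.mk' {a | (⟨a, 0⟩ : Dorroh S T) ∈ K}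
    K.zero_mem
    (fun hx hy => memK_congr K (K.add_mem hx hy) (by ext <;> simp))
    (fun hx => memK_congr K (K.neg_mem hx) (by ext <;> simp))
    (fun {x y} hy => memK_congr K (K.mul_mem_left ⟨x, 0⟩ _ hy) (by ext <;> simp))
    (fun {x y} hx => memK_congr K (K.mul_mem_right _ ⟨y, 0⟩ hx) (by ext <;> simp))

lemma mem_Ztsi {a : S} : a ∈ Ztsi K ↔ (⟨a, 0⟩ : Dorroh S T) ∈ K :=
  TwoSidedIdeal.mem_mk' _ _ _ _ _ _ _

lemma memK_split {a : S} {j : T} (h : (⟨a, -j⟩ : Dorroh S T) ∈ K) :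
    j ∈ Jset K ∧ a - psiK K j ∈ Ztsi K := by
  have hj : j ∈ Jset K := ⟨a, h⟩
  refine ⟨hj, ?_⟩
  rw [mem_Ztsi]
  refine memK_congr K (K.sub_mem h (psiK_mem K hj)) ?_
  ext <;> simp [sub_eq_add_neg]

lemma memK_of {a : S} {j : T} (hj : j ∈ Jset K) (hz : a - psiK K j ∈ Ztsi K) :
    (⟨a, -j⟩ : Dorroh S T) ∈ K := by
  rw [mem_Ztsi] at hz
  refine memK_congr K (K.add_mem (psiK_mem K hj) hz) ?_
  ext <;> simp

end DorrohAux


/-- Every two-sided ideal of `E(R,I)` is of the form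
`{(a,-j) : a ∈ A, j ∈ J, a + Z = φ(j)}` for suitable data, and conversely. -/
theorem dorroh_ideal_description :
    (∀ K : TwoSidedIdeal (Dorroh R I),
      ∃ (A Z : TwoSidedIdeal R) (J : Set I) (ψ : I → R),
        DorrohIdealData R I A Z J ψ ∧
          (K : Set (Dorroh R I)) = DorrohIdealSet R I A Z J ψ) ∧
    (∀ (A Z : TwoSidedIdeal R) (J : Set I) (ψ : I → R),
      DorrohIdealData R I A Z J ψ →
        ∃ K : TwoSidedIdeal (Dorroh R I),
          (K : Set (Dorroh R I)) = DorrohIdealSet R I A Z J ψ) := by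
  constructor
  · -- forward direction
    intro K
    refine ⟨Atsi K, Ztsi K, Jset K, psiK K, ?_, ?_⟩
    · have hJneg : ∀ j ∈ Jset K, -j ∈ Jset K := by
        rintro j ⟨a, ha⟩
        exact ⟨-a, memK_congr K (K.neg_mem ha) (by ext <;> simp <;> try abel)⟩
      have hadd' : ∀ x ∈ Jset K, ∀ y ∈ Jset K,
          (⟨psiK K x + psiK K y, -(x + y)⟩ : Dorroh R I) ∈ K := fun x hx y hy =>
        memK_congr K (K.add_mem (psiK_mem K hx) (psiK_mem K hy)) (by ext <;> simp <;> try abel)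
      have hmul' : ∀ x ∈ Jset K, ∀ y ∈ Jset K,
          (⟨psiK K x * psiK K y, -(x * y)⟩ : Dorroh R I) ∈ K := by
        intro x hx y hy
        have u := psiK_mem K hx
        have v := psiK_mem K hy
        have h := K.add_mem (K.add_mem (K.mul_mem_left (⟨psiK K x, -x⟩ : Dorroh R I) _ v)
          (K.mul_mem_right _ (⟨0, y⟩ : Dorroh R I) u))
          (K.mul_mem_left (⟨0, x⟩ : Dorroh R I) _ v)
        refine memK_congr K h ?_
        ext
        · simp
        · simp only [Dorroh.add_snd, Dorroh.mul_snd, smul_neg, neg_mul, mul_neg, neg_neg,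
            op_zero, zero_smul, smul_zero, zero_mul, mul_zero, zero_add, add_zero]
          abel
      have hsmul' : ∀ (r : R), ∀ x ∈ Jset K,
          (⟨r * psiK K x, -(r • x)⟩ : Dorroh R I) ∈ K := fun r x hx =>
        memK_congr K (K.mul_mem_left (⟨r, 0⟩ : Dorroh R I) _ (psiK_mem K hx))
          (by ext <;> simp <;> try abel)
      have hop' : ∀ (r : R), ∀ x ∈ Jset K,
          (⟨psiK K x * r, -(op r • x)⟩ : Dorroh R I) ∈ K := fun r x hx =>
        memK_congr K (K.mul_mem_right _ (⟨r, 0⟩ : Dorroh R I) (psiK_mem K hx))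
          (by ext <;> simp <;> try abel)
      refine ⟨?_, ⟨?_, ?_, hJneg, ?_, ?_, ?_⟩, ?_, ?_, ?_, ?_, ?_, ?_, ?_⟩
      · -- Z ≤ A
        intro a ha
        exact (mem_Atsi K).2 ⟨0, (mem_Ztsi K).1 ha⟩
      · exact ⟨0, memK_congr K K.zero_mem (by ext <;> simp <;> try abel)⟩
      · exact fun x hx y hy => (memK_split K (hadd' x hx y hy)).1
      · exact fun x hx y hy => (memK_split K (hmul' x hx y hy)).1
      · exact fun r x hx => (memK_split K (hsmul' r x hx)).1
      · exact fun r x hx => (memK_split K (hop' r x hx)).1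
      · exact fun x hx y hy => by simpa using (Ztsi K).neg_mem (memK_split K (hadd' x hx y hy)).2
      · exact fun x hx y hy => by simpa using (Ztsi K).neg_mem (memK_split K (hmul' x hx y hy)).2
      · exact fun r x hx => by simpa using (Ztsi K).neg_mem (memK_split K (hsmul' r x hx)).2
      · exact fun r x hx => by simpa using (Ztsi K).neg_mem (memK_split K (hop' r x hx)).2
      · exact fun j hj => (mem_Atsi K).2 ⟨-j, psiK_mem K hj⟩
      · -- surjectivity
        intro a ha
        obtain ⟨i, hi⟩ := (mem_Atsi K).1 ha
        rw [← neg_neg i] at hi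
        exact ⟨-i, (memK_split K hi).1, (memK_split K hi).2⟩
      · -- conditions (a) and (b)
        intro a j hj haA haZ i
        have hu : (⟨a, -j⟩ : Dorroh R I) ∈ K := memK_of K hj haZ
        constructor
        · have h := K.neg_mem (K.mul_mem_right _ (⟨0, i⟩ : Dorroh R I) hu)
          have h2 : (⟨(0 : R), -(a • i - j * i)⟩ : Dorroh R I) ∈ K := by
            refine memK_congr K h ?_
            ext
            · simp
            · simp only [Dorroh.neg_snd, Dorroh.mul_snd, op_zero, zero_smul, neg_mul,
                zero_add, sub_eq_add_neg]
          obtain ⟨hJ1, hZ1⟩ := memK_split K h2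
          exact ⟨hJ1, by simpa using (Ztsi K).neg_mem hZ1⟩
        · have h := K.neg_mem (K.mul_mem_left (⟨0, i⟩ : Dorroh R I) _ hu)
          have h2 : (⟨(0 : R), -(op a • i - i * j)⟩ : Dorroh R I) ∈ K := by
            refine memK_congr K h ?_
            ext
            · simp
            · simp only [Dorroh.neg_snd, Dorroh.mul_snd, zero_smul, mul_neg,
                add_zero, zero_add, sub_eq_add_neg]
          obtain ⟨hJ1, hZ1⟩ := memK_split K h2
          exact ⟨hJ1, by simpa using (Ztsi K).neg_mem hZ1⟩
    · -- set equality
      ext p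
      simp only [DorrohIdealSet, Set.mem_setOf_eq, SetLike.mem_coe]
      constructor
      · intro h
        have h' : (⟨p.fst, -(-p.snd)⟩ : Dorroh R I) ∈ K := by rw [neg_neg]; exact h
        exact ⟨(mem_Atsi K).2 ⟨p.snd, h⟩, (memK_split K h').1, (memK_split K h').2⟩
      · rintro ⟨-, hJ, hZ⟩
        have h := memK_of K hJ hZ
        rwa [neg_neg] at h
  · -- converse direction
    rintro A Z J ψ ⟨hZA, ⟨hJ0, hJadd, hJneg, hJmul, hJsmul, hJop⟩, hadd, hmul, hsmul, hop,
      hψA, hsurj, hcond⟩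
    have hψ0 : ψ 0 ∈ Z := by
      have h := hadd 0 hJ0 0 hJ0
      have e : ψ (0 + 0) - (ψ 0 + ψ 0) = -ψ 0 := by rw [zero_add]; noncomm_ring
      rw [e] at h
      simpa using Z.neg_mem h
    have hψneg : ∀ j ∈ J, ψ j + ψ (-j) ∈ Z := by
      intro j hj
      have h := hadd j hj (-j) (hJneg j hj)
      rw [add_neg_cancel] at h
      have h2 := Z.sub_mem hψ0 h
      have e : ψ 0 - (ψ 0 - (ψ j + ψ (-j))) = ψ j + ψ (-j) := by noncomm_ring
      rwa [e] at h2
    have hψnegZ : ∀ j ∈ J, ψ j ∈ Z → ψ (-j) ∈ Z := by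
      intro j hj h
      have h2 := Z.sub_mem (hψneg j hj) h
      have e : ψ j + ψ (-j) - ψ j = ψ (-j) := by noncomm_ring
      rwa [e] at h2
    refine ⟨TwoSidedIdeal.mk' (DorrohIdealSet R I A Z J ψ) ?_ ?_ ?_ ?_ ?_,
      TwoSidedIdeal.coe_mk' _ _ _ _ _ _⟩
    · -- zero
      refine ⟨A.zero_mem, ?_, ?_⟩
      · simpa using hJ0
      · simpa using Z.neg_mem hψ0
    · -- add
      rintro p q ⟨hpA, hpJ, hpZ⟩ ⟨hqA, hqJ, hqZ⟩
      have e : -((p + q).snd) = -p.snd + -q.snd := by rw [Dorroh.add_snd, neg_add]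
      refine ⟨A.add_mem hpA hqA, ?_, ?_⟩
      · rw [e]; exact hJadd _ hpJ _ hqJ
      · rw [Dorroh.add_fst, e]
        have d1 := hadd _ hpJ _ hqJ
        have h := Z.sub_mem (Z.add_mem hpZ hqZ) d1
        have e2 : p.fst - ψ (-p.snd) + (q.fst - ψ (-q.snd)) -
            (ψ (-p.snd + -q.snd) - (ψ (-p.snd) + ψ (-q.snd))) =
            p.fst + q.fst - ψ (-p.snd + -q.snd) := by noncomm_ring
        rwa [e2] at h
    · -- neg
      rintro p ⟨hpA, hpJ, hpZ⟩
      have e : -((-p).snd) = -(-p.snd) := by simp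
      refine ⟨A.neg_mem hpA, ?_, ?_⟩
      · rw [e]; exact hJneg _ hpJ
      · rw [Dorroh.neg_fst, e]
        have h := Z.sub_mem (Z.neg_mem hpZ) (hψneg _ hpJ)
        have e2 : -(p.fst - ψ (-p.snd)) - (ψ (-p.snd) + ψ (-(-p.snd))) =
            -p.fst - ψ (-(-p.snd)) := by noncomm_ring
        rwa [e2] at h
    · -- mul left
      rintro x y ⟨hyA, hyJ, hyZ⟩
      obtain ⟨-, hs2J, hs2Z⟩ := hcond y.fst (-y.snd) hyJ hyA hyZ x.snd
      have e : -((x * y).snd) = x.fst • -y.snd + -(op y.fst • x.snd - x.snd * -y.snd) := by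
        simp only [Dorroh.mul_snd, smul_neg, mul_neg, neg_sub, neg_add, neg_neg,
          sub_eq_add_neg]
        abel
      have ht1J := hJsmul x.fst _ hyJ
      have ht2J := hJneg _ hs2J
      refine ⟨A.mul_mem_left _ _ hyA, ?_, ?_⟩
      · rw [e]; exact hJadd _ ht1J _ ht2J
      · rw [Dorroh.mul_fst, e]
        have d1 := hadd _ ht1J _ ht2J
        have d2 := hsmul x.fst _ hyJ
        have d3 : ψ (-(op y.fst • x.snd - x.snd * -y.snd)) ∈ Z := hψnegZ _ hs2J hs2Z
        have d4 := Z.mul_mem_left x.fst _ hyZ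
        have h := Z.sub_mem (Z.sub_mem (Z.sub_mem d4 d1) d2) d3
        have e2 : x.fst * (y.fst - ψ (-y.snd)) -
            (ψ (x.fst • -y.snd + -(op y.fst • x.snd - x.snd * -y.snd)) -
              (ψ (x.fst • -y.snd) + ψ (-(op y.fst • x.snd - x.snd * -y.snd)))) -
            (ψ (x.fst • -y.snd) - x.fst * ψ (-y.snd)) -
            ψ (-(op y.fst • x.snd - x.snd * -y.snd)) =
            x.fst * y.fst - ψ (x.fst • -y.snd + -(op y.fst • x.snd - x.snd * -y.snd)) := by
          noncomm_ring
        rwa [e2] at h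
    · -- mul right
      rintro x y ⟨hxA, hxJ, hxZ⟩
      obtain ⟨⟨hs1J, hs1Z⟩, -⟩ := hcond x.fst (-x.snd) hxJ hxA hxZ y.snd
      have e : -((x * y).snd) = op y.fst • -x.snd + -(x.fst • y.snd - -x.snd * y.snd) := by
        simp only [Dorroh.mul_snd, smul_neg, neg_mul, neg_sub, neg_add, neg_neg,
          sub_eq_add_neg]
        abel
      have ht1J := hJop y.fst _ hxJ
      have ht2J := hJneg _ hs1J
      refine ⟨A.mul_mem_right _ _ hxA, ?_, ?_⟩
      · rw [e]; exact hJadd _ ht1J _ ht2J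
      · rw [Dorroh.mul_fst, e]
        have d1 := hadd _ ht1J _ ht2J
        have d2 := hop y.fst _ hxJ
        have d3 : ψ (-(x.fst • y.snd - -x.snd * y.snd)) ∈ Z := hψnegZ _ hs1J hs1Z
        have d4 := Z.mul_mem_right _ y.fst hxZ
        have h := Z.sub_mem (Z.sub_mem (Z.sub_mem d4 d1) d2) d3
        have e2 : (x.fst - ψ (-x.snd)) * y.fst -
            (ψ (op y.fst • -x.snd + -(x.fst • y.snd - -x.snd * y.snd)) -
              (ψ (op y.fst • -x.snd) + ψ (-(x.fst • y.snd - -x.snd * y.snd)))) -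
            (ψ (op y.fst • -x.snd) - ψ (-x.snd) * y.fst) -
            ψ (-(x.fst • y.snd - -x.snd * y.snd)) =
            x.fst * y.fst - ψ (op y.fst • -x.snd + -(x.fst • y.snd - -x.snd * y.snd)) := by
          noncomm_ring
        rwa [e2] at h
end

section
/- Let K ⊆ E(R,I) be an ideal with associated data A, J, Z, φ as in the structure theorem for ideals of E(R,I). Then K is nilpotent if and only if both A and J are nilpotent, if and only if both A and ker(φ) are nilpotent. The same equivalences hold with 'nil' in place of 'nilpotent'. -/
open MulOpposite

variable (R I : Type*) [Ring R] [NonUnitalRing I] [Module R I] [Module Rᵐᵒᵖ I] [IsRRng R I]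

open MulOpposite

/-!
Both `K` and `J` lie over `A` with fibre `ker φ`: the projection `(a, i) ↦ a` maps `K` onto `A`,
and the elements of `K` over `0` are the `(0, i)` with `i ∈ ker φ`; likewise `φ` maps `J`
multiplicatively into `A/Z` with kernel `ker φ`. Nilpotence of `K` passes to its image `A` and to
the copy of `ker φ` inside it. Conversely, if all products of `a + 1` elements of `A` vanish, every
product of `a + 1` elements of `K` (or of `J`) lies over `0`, hence in `ker φ`, and a long product
regroups into a long product of such blocks. For nil, the same argument runs on the powers of a
single element.
-/

section Products

variable {M N : Type*}

theorem List.foldl_mul_mem [Mul M] {S : Set M} (hS : ∀ x ∈ S, ∀ y ∈ S, x * y ∈ S)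
    {x : M} (hx : x ∈ S) {l : List M} (hl : ∀ y ∈ l, y ∈ S) : l.foldl (· * ·) x ∈ S := by
  induction l generalizing x with
  | nil => exact hx
  | cons h t ih =>
    exact ih (hS x hx h (hl h List.mem_cons_self)) fun y hy => hl y (List.mem_cons_of_mem _ hy)

theorem List.map_foldl_mul_of_mul_mem [Mul M] [Mul N] {S : Set M} (f : M → N)
    (hS : ∀ x ∈ S, ∀ y ∈ S, x * y ∈ S) (hf : ∀ x ∈ S, ∀ y ∈ S, f (x * y) = f x * f y)
    {x : M} (hx : x ∈ S) {l : List M} (hl : ∀ y ∈ l, y ∈ S) :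
    f (l.foldl (· * ·) x) = (l.map f).foldl (· * ·) (f x) := by
  induction l generalizing x with
  | nil => rfl
  | cons h t ih =>
    have hh : h ∈ S := hl h List.mem_cons_self
    rw [List.foldl_cons, ih (hS x hx h hh) fun y hy => hl y (List.mem_cons_of_mem _ hy),
      hf x hx h hh, List.map_cons, List.foldl_cons]

theorem List.map_foldl_mul {F : Type*} [Mul M] [Mul N] [FunLike F M N] [MulHomClass F M N]
    (f : F) (x : M) (l : List M) : f (l.foldl (· * ·) x) = (l.map f).foldl (· * ·) (f x) :=
  List.map_foldl_mul_of_mul_mem (S := Set.univ) f (fun _ _ _ _ => trivial)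
    (fun x _ y _ => map_mul f x y) trivial fun _ _ => trivial

theorem npowNZ_eq_foldl_replicate [NonUnitalRing M] (x : M) (n : ℕ) :
    npowNZ x n = (List.replicate n x).foldl (· * ·) x := by
  induction n with
  | zero => rfl
  | succ n ih => rw [List.replicate_succ', List.foldl_append, ← ih]; rfl

theorem map_npowNZ {F : Type*} [NonUnitalRing M] [NonUnitalRing N] [FunLike F M N]
    [MulHomClass F M N] (f : F) (x : M) (n : ℕ) : f (npowNZ x n) = npowNZ (f x) n := by
  rw [npowNZ_eq_foldl_replicate, List.map_foldl_mul, List.map_replicate,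
    ← npowNZ_eq_foldl_replicate]

theorem npowNZ_add [NonUnitalRing M] (x : M) (a b : ℕ) :
    npowNZ x (a + b + 1) = npowNZ x a * npowNZ x b := by
  induction b with
  | zero => rfl
  | succ b ih => rw [← add_assoc, npowNZ, ih, npowNZ, mul_assoc]

theorem npowNZ_npowNZ [NonUnitalRing M] (x : M) (n m : ℕ) :
    npowNZ (npowNZ x n) m = npowNZ x ((m + 1) * n + m) := by
  induction m with
  | zero => simp [npowNZ]
  | succ m ih =>
    rw [npowNZ, ih, ← npowNZ_add]
    congr 1
    ring

end Products

section Nilpotence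

variable {M N F : Type*} [NonUnitalRing M] [NonUnitalRing N] [FunLike F M N]
  [NonUnitalRingHomClass F M N]

theorem SetIsNilpotent.mono {S T : Set M} (hT : SetIsNilpotent T) (hST : S ⊆ T) :
    SetIsNilpotent S := by
  obtain ⟨n, hn⟩ := hT
  exact ⟨n, fun x l hx hl hlen => hn x l (hST hx) (fun y hy => hST (hl y hy)) hlen⟩

theorem SetIsNilpotent.of_surjOn {S : Set M} {T : Set N} (hS : SetIsNilpotent S)
    (f : F) (hf : Set.SurjOn f S T) : SetIsNilpotent T := by
  obtain ⟨n, hn⟩ := hS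
  refine ⟨n, fun x l hx hl hlen => ?_⟩
  obtain ⟨x', hx'S, rfl⟩ := hf hx
  choose! g hgS hfg using fun y (hy : y ∈ l) => hf (hl y hy)
  have hl' : (l.map g).map f = l := by
    rw [List.map_map]
    exact (List.map_congr_left fun y hy => hfg y hy).trans (List.map_id l)
  rw [← hl', ← List.map_foldl_mul, hn x' (l.map g) hx'S (by simpa using hgS) (by simpa using hlen),
    map_zero]

theorem SetIsNilpotent.of_injective {S : Set M} {T : Set N} (hT : SetIsNilpotent T)
    (f : F) (hf : Function.Injective f) (hST : Set.MapsTo f S T) : SetIsNilpotent S := by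
  obtain ⟨n, hn⟩ := hT
  refine ⟨n, fun x l hx hl hlen => hf ?_⟩
  rw [List.map_foldl_mul, map_zero]
  exact hn (f x) (l.map f) (hST hx) (by simpa using fun y hy => hST (hl y hy)) (by simpa using hlen)

theorem SetIsNilpotent.of_foldl_mem {S T : Set M} (a : ℕ)
    (hST : ∀ x ∈ S, ∀ l : List M, (∀ y ∈ l, y ∈ S) → l.length = a → l.foldl (· * ·) x ∈ T)
    (hT : SetIsNilpotent T) : SetIsNilpotent S := by
  obtain ⟨b, hb⟩ := hT
  -- group the factors into consecutive blocks of `a + 1`, each of which lands in `T`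
  have regroup : ∀ k : ℕ, ∀ x ∈ S, ∀ l : List M, (∀ y ∈ l, y ∈ S) →
      l.length = (a + 1) * k + a → ∃ t ∈ T, ∃ ts : List M, (∀ u ∈ ts, u ∈ T) ∧
        ts.length = k ∧ l.foldl (· * ·) x = ts.foldl (· * ·) t := by
    intro k
    induction k with
    | zero => exact fun x hx l hl hlen => ⟨_, hST x hx l hl (by simpa using hlen), [], by simp⟩
    | succ k ih =>
      intro x hx l hl hlen
      set m := (a + 1) * k + a
      obtain ⟨h, t, hht⟩ : ∃ h t, l.drop m = h :: t :=
        List.exists_cons_of_ne_nil (by rw [← List.length_pos_iff, List.length_drop]; lia)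
      have hdrop : ∀ y ∈ l.drop m, y ∈ S := fun y hy => hl y (List.mem_of_mem_drop hy)
      have htlen : t.length = a := by
        have := congrArg List.length hht
        rw [List.length_drop] at this
        simp only [List.length_cons] at this
        lia
      obtain ⟨t₀, ht₀, ts, hts, htslen, hfold⟩ := ih x hx (l.take m)
        (fun y hy => hl y (List.mem_of_mem_take hy)) (by rw [List.length_take]; lia)
      refine ⟨t₀, ht₀, ts ++ [t.foldl (· * ·) h], ?_, by simp [htslen], ?_⟩
      · simp only [List.mem_append, List.mem_singleton]
        rintro u (hu | rfl)
        · exact hts u hu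
        · exact hST h (hdrop h (by simp [hht])) t
            (fun y hy => hdrop y (by simp [hht, hy])) htlen
      · rw [← List.take_append_drop m l, List.foldl_append, hfold, hht, List.foldl_cons,
          List.foldl_assoc, List.foldl_append, List.foldl_cons, List.foldl_nil]
  refine ⟨(a + 1) * b + a, fun x l hx hl hlen => ?_⟩
  obtain ⟨t, ht, ts, hts, htslen, hfold⟩ := regroup b x hx l hl hlen
  rw [hfold]
  exact hb t ts ht hts htslen

theorem SetIsNil.mono {S T : Set M} (hT : SetIsNil T) (hST : S ⊆ T) : SetIsNil S :=
  fun x hx => hT x (hST hx)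

theorem IsNilElem.map {x : M} (hx : IsNilElem x) (f : F) : IsNilElem (f x) := by
  obtain ⟨n, hn⟩ := hx
  exact ⟨n, by rw [← map_npowNZ, hn, map_zero]⟩

theorem IsNilElem.of_map_injective {x : M} (f : F) (hf : Function.Injective f)
    (hx : IsNilElem (f x)) : IsNilElem x := by
  obtain ⟨n, hn⟩ := hx
  exact ⟨n, hf (by rw [map_npowNZ, hn, map_zero])⟩

theorem IsNilElem.of_npowNZ {x : M} {n : ℕ} (hx : IsNilElem (npowNZ x n)) : IsNilElem x := by
  obtain ⟨m, hm⟩ := hx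
  exact ⟨(m + 1) * n + m, by rw [← npowNZ_npowNZ, hm]⟩

end Nilpotence

namespace Dorroh

variable {R I}

def fstHom : Dorroh R I →+* R where
  toFun := Dorroh.fst
  map_one' := rfl
  map_mul' _ _ := rfl
  map_zero' := rfl
  map_add' _ _ := rfl

def inr : I →ₙ+* Dorroh R I where
  toFun x := ⟨0, x⟩
  map_mul' _ _ := by ext <;> simp
  map_zero' := rfl
  map_add' _ _ := by ext <;> simp

@[simp] theorem fstHom_apply (p : Dorroh R I) : fstHom p = p.fst := rfl

@[simp] theorem inr_fst (x : I) : (inr x : Dorroh R I).fst = 0 := rfl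

@[simp] theorem inr_snd (x : I) : (inr x : Dorroh R I).snd = x := rfl

theorem inr_injective : Function.Injective (inr : I → Dorroh R I) :=
  fun _ _ h => congrArg Dorroh.snd h

theorem inr_snd_eq_of_fst_eq_zero {p : Dorroh R I} (hp : p.fst = 0) : inr p.snd = p := by
  ext
  · exact hp.symm
  · rfl

end Dorroh

namespace TwoSidedIdeal

variable {S : Type*} [Ring S] (Z : TwoSidedIdeal S)

theorem ringCon_mk'_eq_iff (x y : S) : Z.ringCon.mk' x = Z.ringCon.mk' y ↔ x - y ∈ Z := by
  rw [RingCon.coe_mk', RingCon.eq, rel_iff]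

theorem ringCon_mk'_eq_zero_iff (x : S) : Z.ringCon.mk' x = 0 ↔ x ∈ Z := by
  rw [← map_zero Z.ringCon.mk', ringCon_mk'_eq_iff, sub_zero]

end TwoSidedIdeal

namespace IsRSubrng

variable {S M : Type*} [Ring S] [NonUnitalRing M] [Module S M] [Module Sᵐᵒᵖ M] {J : Set M}
  {x y : M}

theorem add_mem (hJ : IsRSubrng S J) (hx : x ∈ J) (hy : y ∈ J) : x + y ∈ J := hJ.2.1 x hx y hy

theorem neg_mem (hJ : IsRSubrng S J) (hx : x ∈ J) : -x ∈ J := hJ.2.2.1 x hx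

theorem mul_mem (hJ : IsRSubrng S J) (hx : x ∈ J) (hy : y ∈ J) : x * y ∈ J := hJ.2.2.2.1 x hx y hy

theorem smul_mem (hJ : IsRSubrng S J) (r : S) (hx : x ∈ J) : r • x ∈ J := hJ.2.2.2.2.1 r x hx

theorem op_smul_mem (hJ : IsRSubrng S J) (r : S) (hx : x ∈ J) : op r • x ∈ J := hJ.2.2.2.2.2 r x hx

end IsRSubrng

namespace DorrohIdealData

variable {R I} {A Z : TwoSidedIdeal R} {J : Set I} {ψ : I → R}

section Phi

omit [IsRRng R I]

/-- The paper's `φ : J → A/Z`, read in `R/Z` through the representatives `ψ`. -/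
def phi (Z : TwoSidedIdeal R) (ψ : I → R) (x : I) : Z.ringCon.Quotient := Z.ringCon.mk' (ψ x)

def phiKer (J : Set I) (Z : TwoSidedIdeal R) (ψ : I → R) : Set I := {x | x ∈ J ∧ ψ x ∈ Z}

omit [NonUnitalRing I] [Module R I] [Module Rᵐᵒᵖ I] in
theorem mem_phiKer_iff {x : I} : x ∈ phiKer J Z ψ ↔ x ∈ J ∧ phi Z ψ x = 0 := by
  rw [phi, TwoSidedIdeal.ringCon_mk'_eq_zero_iff]
  rfl

omit [Module R I] [Module Rᵐᵒᵖ I] in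
theorem mem_dorrohIdealSet_iff {p : Dorroh R I} :
    p ∈ DorrohIdealSet R I A Z J ψ ↔
      p.fst ∈ A ∧ -p.snd ∈ J ∧ Z.ringCon.mk' p.fst = phi Z ψ (-p.snd) := by
  rw [phi, TwoSidedIdeal.ringCon_mk'_eq_iff]
  rfl

variable (hd : DorrohIdealData R I A Z J ψ) {x y : I}
include hd

theorem isRSubrng : IsRSubrng R J := hd.2.1

theorem phi_add (hx : x ∈ J) (hy : y ∈ J) : phi Z ψ (x + y) = phi Z ψ x + phi Z ψ y := by
  rw [phi, phi, phi, ← map_add, TwoSidedIdeal.ringCon_mk'_eq_iff]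
  exact hd.2.2.1 x hx y hy

theorem phi_mul (hx : x ∈ J) (hy : y ∈ J) : phi Z ψ (x * y) = phi Z ψ x * phi Z ψ y := by
  rw [phi, phi, phi, ← map_mul, TwoSidedIdeal.ringCon_mk'_eq_iff]
  exact hd.2.2.2.1 x hx y hy

theorem phi_smul (r : R) (hx : x ∈ J) : phi Z ψ (r • x) = Z.ringCon.mk' r * phi Z ψ x := by
  rw [phi, phi, ← map_mul, TwoSidedIdeal.ringCon_mk'_eq_iff]
  exact hd.2.2.2.2.1 r x hx

theorem phi_op_smul (r : R) (hx : x ∈ J) : phi Z ψ (op r • x) = phi Z ψ x * Z.ringCon.mk' r := by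
  rw [phi, phi, ← map_mul, TwoSidedIdeal.ringCon_mk'_eq_iff]
  exact hd.2.2.2.2.2.1 r x hx

theorem phi_neg (hx : x ∈ J) : phi Z ψ (-x) = -phi Z ψ x := by
  rw [← neg_one_smul R x, hd.phi_smul _ hx, map_neg, map_one, neg_one_mul]

theorem psi_mem (hx : x ∈ J) : ψ x ∈ A := hd.2.2.2.2.2.2.1 x hx

theorem exists_sub_mem {a : R} (ha : a ∈ A) : ∃ j ∈ J, a - ψ j ∈ Z := hd.2.2.2.2.2.2.2.1 a ha

theorem foldl_mem_phiKer (hx : x ∈ J) {l : List I} (hl : ∀ y ∈ l, y ∈ J)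
    (h : (l.map ψ).foldl (· * ·) (ψ x) ∈ Z) : l.foldl (· * ·) x ∈ phiKer J Z ψ := by
  have hJ := hd.isRSubrng
  rw [mem_phiKer_iff]
  refine ⟨List.foldl_mul_mem (fun _ hx _ hy => hJ.mul_mem hx hy) hx hl, ?_⟩
  rw [List.map_foldl_mul_of_mul_mem (phi Z ψ) (fun _ hx _ hy => hJ.mul_mem hx hy)
    (fun _ hx _ hy => hd.phi_mul hx hy) hx hl, show phi Z ψ = Z.ringCon.mk' ∘ ψ from rfl,
    ← List.map_map, Function.comp_apply, ← List.map_foldl_mul,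
    TwoSidedIdeal.ringCon_mk'_eq_zero_iff]
  exact h

theorem npowNZ_mem_phiKer (hx : x ∈ J) {n : ℕ} (h : npowNZ (ψ x) n ∈ Z) :
    npowNZ x n ∈ phiKer J Z ψ := by
  rw [npowNZ_eq_foldl_replicate]
  refine hd.foldl_mem_phiKer hx (fun y hy => (List.eq_of_mem_replicate hy) ▸ hx) ?_
  rwa [List.map_replicate, ← npowNZ_eq_foldl_replicate]

theorem snd_mem_phiKer {p : Dorroh R I} (hp : p ∈ DorrohIdealSet R I A Z J ψ) (h0 : p.fst = 0) :
    p.snd ∈ phiKer J Z ψ := by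
  rw [mem_dorrohIdealSet_iff, h0, map_zero] at hp
  obtain ⟨-, hs, hs0⟩ := hp
  rw [mem_phiKer_iff, ← neg_neg p.snd, hd.phi_neg hs, ← hs0, neg_zero]
  exact ⟨hd.isRSubrng.neg_mem hs, rfl⟩

theorem setIsNilpotent_iff_of_setIsNilpotent (hA : SetIsNilpotent (A : Set R)) :
    SetIsNilpotent J ↔ SetIsNilpotent (phiKer J Z ψ) := by
  refine ⟨fun hJ => hJ.mono fun _ hx => hx.1, fun hN => ?_⟩
  obtain ⟨a, ha⟩ := hA
  refine SetIsNilpotent.of_foldl_mem a (fun x hx l hl hlen => hd.foldl_mem_phiKer hx hl ?_) hN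
  rw [ha _ _ (hd.psi_mem hx) (List.forall_mem_map.mpr fun y hy => hd.psi_mem (hl y hy))
    (by simpa using hlen)]
  exact Z.zero_mem

theorem setIsNil_iff_of_setIsNil (hA : SetIsNil (A : Set R)) :
    SetIsNil J ↔ SetIsNil (phiKer J Z ψ) := by
  refine ⟨fun hJ => hJ.mono fun _ hx => hx.1, fun hN x hx => ?_⟩
  obtain ⟨n, hn⟩ := hA (ψ x) (hd.psi_mem hx)
  exact (hN _ (hd.npowNZ_mem_phiKer hx (hn ▸ Z.zero_mem))).of_npowNZ

end Phi

variable (hd : DorrohIdealData R I A Z J ψ)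
include hd

theorem mul_mem {p q : Dorroh R I} (hp : p ∈ DorrohIdealSet R I A Z J ψ)
    (hq : q ∈ DorrohIdealSet R I A Z J ψ) : p * q ∈ DorrohIdealSet R I A Z J ψ := by
  obtain ⟨a, s⟩ := p
  obtain ⟨a', s'⟩ := q
  rw [mem_dorrohIdealSet_iff] at hp hq ⊢
  obtain ⟨ha, hs, has⟩ := hp
  obtain ⟨-, hs', has'⟩ := hq
  have hJ := hd.isRSubrng
  have h₁ := hJ.op_smul_mem a' hs
  have h₂ := hJ.smul_mem a hs'
  have h₃ := hJ.mul_mem hs hs'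
  have hsnd : -(Dorroh.mk a s * Dorroh.mk a' s').snd = op a' • -s + a • -s' + -(-s * -s') := by
    rw [Dorroh.mul_snd, smul_neg, smul_neg, neg_mul_neg]
    abel
  refine ⟨A.mul_mem_right _ _ ha, ?_, ?_⟩
  · rw [hsnd]
    exact hJ.add_mem (hJ.add_mem h₁ h₂) (hJ.neg_mem h₃)
  · rw [hsnd, hd.phi_add (hJ.add_mem h₁ h₂) (hJ.neg_mem h₃), hd.phi_add h₁ h₂,
      hd.phi_op_smul a' hs, hd.phi_smul a hs', hd.phi_neg h₃, hd.phi_mul hs hs', ← has, ← has',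
      Dorroh.mul_fst, map_mul]
    abel

theorem foldl_mul_mem {p : Dorroh R I} (hp : p ∈ DorrohIdealSet R I A Z J ψ) {l : List (Dorroh R I)}
    (hl : ∀ q ∈ l, q ∈ DorrohIdealSet R I A Z J ψ) :
    l.foldl (· * ·) p ∈ DorrohIdealSet R I A Z J ψ :=
  List.foldl_mul_mem (fun _ hp _ hq => hd.mul_mem hp hq) hp hl

theorem npowNZ_mem {p : Dorroh R I} (hp : p ∈ DorrohIdealSet R I A Z J ψ) (n : ℕ) :
    npowNZ p n ∈ DorrohIdealSet R I A Z J ψ := by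
  rw [npowNZ_eq_foldl_replicate]
  exact hd.foldl_mul_mem hp fun q hq => (List.eq_of_mem_replicate hq).symm ▸ hp

theorem surjOn_fstHom : Set.SurjOn Dorroh.fstHom (DorrohIdealSet R I A Z J ψ) A := by
  intro a ha
  obtain ⟨j, hj, haj⟩ := hd.2.2.2.2.2.2.2.1 a ha
  refine ⟨⟨a, -j⟩, ?_, rfl⟩
  show a ∈ A ∧ -(-j) ∈ J ∧ a - ψ (-(-j)) ∈ Z
  rw [neg_neg]
  exact ⟨ha, hj, haj⟩

theorem mapsTo_inr : Set.MapsTo Dorroh.inr (phiKer J Z ψ) (DorrohIdealSet R I A Z J ψ) := by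
  intro x hx
  rw [mem_phiKer_iff] at hx
  rw [mem_dorrohIdealSet_iff, Dorroh.inr_fst, Dorroh.inr_snd, hd.phi_neg hx.1, hx.2, neg_zero,
    map_zero]
  exact ⟨A.zero_mem, hd.isRSubrng.neg_mem hx.1, rfl⟩

theorem surjOn_inr : Set.SurjOn Dorroh.inr (phiKer J Z ψ)
    {p | p ∈ DorrohIdealSet R I A Z J ψ ∧ p.fst = 0} :=
  fun _ ⟨hp, h0⟩ => ⟨_, hd.snd_mem_phiKer hp h0, Dorroh.inr_snd_eq_of_fst_eq_zero h0⟩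

theorem setIsNilpotent_dorrohIdealSet (hA : SetIsNilpotent (A : Set R))
    (hN : SetIsNilpotent (phiKer J Z ψ)) : SetIsNilpotent (DorrohIdealSet R I A Z J ψ) := by
  obtain ⟨a, ha⟩ := hA
  refine SetIsNilpotent.of_foldl_mem (T := {p | p ∈ DorrohIdealSet R I A Z J ψ ∧ p.fst = 0}) a
    (fun p hp l hl hlen => ⟨hd.foldl_mul_mem hp hl, ?_⟩) (hN.of_surjOn Dorroh.inr hd.surjOn_inr)
  rw [← Dorroh.fstHom_apply, List.map_foldl_mul]
  exact ha _ _ hp.1 (List.forall_mem_map.mpr fun q hq => (hl q hq).1) (by simpa using hlen)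

theorem setIsNil_dorrohIdealSet (hA : SetIsNil (A : Set R)) (hN : SetIsNil (phiKer J Z ψ)) :
    SetIsNil (DorrohIdealSet R I A Z J ψ) := by
  intro p hp
  obtain ⟨n, hn⟩ := hA p.fst hp.1
  have h0 : (npowNZ p n).fst = 0 := by
    rw [← Dorroh.fstHom_apply, map_npowNZ, Dorroh.fstHom_apply, hn]
  refine IsNilElem.of_npowNZ (n := n) ?_
  rw [← Dorroh.inr_snd_eq_of_fst_eq_zero h0]
  exact (hN _ (hd.snd_mem_phiKer (hd.npowNZ_mem hp n) h0)).map Dorroh.inr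

theorem setIsNilpotent_dorrohIdealSet_iff :
    SetIsNilpotent (DorrohIdealSet R I A Z J ψ) ↔
      SetIsNilpotent (A : Set R) ∧ SetIsNilpotent (phiKer J Z ψ) :=
  ⟨fun hK => ⟨hK.of_surjOn Dorroh.fstHom hd.surjOn_fstHom,
      hK.of_injective Dorroh.inr Dorroh.inr_injective hd.mapsTo_inr⟩,
    fun h => hd.setIsNilpotent_dorrohIdealSet h.1 h.2⟩

theorem setIsNil_dorrohIdealSet_iff :
    SetIsNil (DorrohIdealSet R I A Z J ψ) ↔ SetIsNil (A : Set R) ∧ SetIsNil (phiKer J Z ψ) := by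
  refine ⟨fun hK => ⟨fun a ha => ?_, fun _ hx => ?_⟩, fun h => hd.setIsNil_dorrohIdealSet h.1 h.2⟩
  · obtain ⟨p, hp, rfl⟩ := hd.surjOn_fstHom ha
    exact (hK p hp).map Dorroh.fstHom
  · exact (hK _ (hd.mapsTo_inr hx)).of_map_injective Dorroh.inr Dorroh.inr_injective

end DorrohIdealData

/-- For an ideal `K` of `E(R,I)` with associated data `A`, `J`, `Z`, `ψ`, the ideal `K`
is nilpotent (resp. nil) iff `A` and `J` are, iff `A` and `ker φ` are. -/
theorem dorroh_ideal_nilpotent_iff (A Z : TwoSidedIdeal R) (J : Set I) (ψ : I → R)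
    (hdata : DorrohIdealData R I A Z J ψ) :
    (SetIsNilpotent (DorrohIdealSet R I A Z J ψ) ↔
      (SetIsNilpotent (A : Set R) ∧ SetIsNilpotent J)) ∧
    (SetIsNilpotent (DorrohIdealSet R I A Z J ψ) ↔
      (SetIsNilpotent (A : Set R) ∧ SetIsNilpotent {x : I | x ∈ J ∧ ψ x ∈ Z})) ∧
    (SetIsNil (DorrohIdealSet R I A Z J ψ) ↔
      (SetIsNil (A : Set R) ∧ SetIsNil J)) ∧
    (SetIsNil (DorrohIdealSet R I A Z J ψ) ↔
      (SetIsNil (A : Set R) ∧ SetIsNil {x : I | x ∈ J ∧ ψ x ∈ Z})) := by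
  have nilpotent_iff := hdata.setIsNilpotent_dorrohIdealSet_iff
  have nil_iff := hdata.setIsNil_dorrohIdealSet_iff
  refine ⟨nilpotent_iff.trans (and_congr_right fun hA => ?_), nilpotent_iff,
    nil_iff.trans (and_congr_right fun hA => ?_), nil_iff⟩
  · exact (hdata.setIsNilpotent_iff_of_setIsNilpotent hA).symm
  · exact (hdata.setIsNil_iff_of_setIsNil hA).symm
end

section
/- For any ring R and R-rng I, the Jacobson radical rad(I) of the rng I is an R-ideal of I, i.e., it is closed under left and right multiplication by elements of R. -/
open MulOpposite

variable (R I : Type*) [Ring R] [NonUnitalRing I] [Module R I] [Module Rᵐᵒᵖ I] [IsRRng R I]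

open MulOpposite


section AuxRad

variable {R' I' : Type*} [Ring R'] [NonUnitalRing I'] [Module R' I'] [Module R'ᵐᵒᵖ I']
  [IsRRng R' I']

/-- If `x + k + kx = w` and `w` is left quasi-regular, so is `x`. -/
lemma isLQR_of_eq {x k w : I'} (h : x + k + k * x = w) (hw : IsLQR w) : IsLQR x := by
  obtain ⟨m, hm⟩ := hw
  refine ⟨k + m + m * k, ?_⟩
  have e : x + (k + m + m * k) + (k + m + m * k) * x
      = (x + k + k * x) + m + m * (x + k + k * x) := by noncomm_ring
  rw [e, h, hm]

/-- If `ab` is left quasi-regular then so is `ba`. -/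
lemma isLQR_swap {a b : I'} (h : IsLQR (a * b)) : IsLQR (b * a) := by
  obtain ⟨k, hk⟩ := h
  refine ⟨-(b * a) - b * k * a, ?_⟩
  have e : b * a + (-(b * a) - b * k * a) + (-(b * a) - b * k * a) * (b * a)
      = -(b * (a * b + k + k * (a * b)) * a) := by noncomm_ring
  rw [e, hk, mul_zero, zero_mul, neg_zero]

/-- If `-(z*z)` is left quasi-regular then so is `z`. -/
lemma isLQR_of_neg_sq {z : I'} (h : IsLQR (-(z * z))) : IsLQR z :=
  isLQR_of_eq (k := -z) (by noncomm_ring) h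

lemma rad_neg {x : I'} (hx : x ∈ rngRad I') : -x ∈ rngRad I' := fun j => by
  rw [mul_neg, ← neg_mul]; exact hx (-j)

lemma rad_mul_left {x : I'} (hx : x ∈ rngRad I') (i : I') : i * x ∈ rngRad I' := fun j => by
  rw [← mul_assoc]; exact hx (j * i)

lemma rad_mul_right {x : I'} (hx : x ∈ rngRad I') (i : I') : x * i ∈ rngRad I' := fun j => by
  rw [← mul_assoc]
  exact isLQR_swap (a := i) (b := j * x) (by rw [← mul_assoc]; exact hx (i * j))

lemma rad_isLQR {u : I'} (hu : u ∈ rngRad I') : IsLQR u :=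
  isLQR_of_neg_sq (by rw [← neg_mul]; exact hu (-u))

lemma rad_add {x y : I'} (hx : x ∈ rngRad I') (hy : y ∈ rngRad I') :
    x + y ∈ rngRad I' := fun j => by
  rw [mul_add]
  obtain ⟨k, hk⟩ := hx j
  refine isLQR_of_eq (k := k) (w := (j + k * j) * y) ?_ (hy _)
  have e : (j * x + j * y) + k + k * (j * x + j * y)
      = (j * x + k + k * (j * x)) + (j + k * j) * y := by noncomm_ring
  rw [e, hk, zero_add]

lemma rad_smul (r : R') {x : I'} (hx : x ∈ rngRad I') : r • x ∈ rngRad I' := fun j => by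
  rw [IsRRng.mul_smul_eq]; exact hx (op r • j)

lemma rad_op_smul_isLQR (r : R') {z : I'} (hz : z ∈ rngRad I') : IsLQR (op r • z) := by
  apply isLQR_of_neg_sq
  have e : -(op r • z * op r • z) = (-z) * (r • (op r • z)) := by
    rw [neg_mul, ← IsRRng.mul_smul_eq]
  rw [e]
  exact rad_isLQR (rad_mul_right (rad_neg hz) _)

lemma rad_op_smul (r : R') {x : I'} (hx : x ∈ rngRad I') : op r • x ∈ rngRad I' := fun j => by
  rw [← IsRRng.op_smul_mul]
  exact rad_op_smul_isLQR r (rad_mul_left hx j)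

end AuxRad

/-- The Jacobson radical of the rng `I` is an `R`-ideal of `I`. -/
theorem rngRad_isRIdeal : IsRIdeal R (rngRad I) := by
  refine ⟨⟨fun j => ?_, fun x hx y hy => rad_add hx hy, fun x hx => rad_neg hx,
    fun x hx y _ => rad_mul_right hx y, fun r x hx => rad_smul r hx,
    fun r x hx => rad_op_smul r hx⟩,
    fun i j hj => ⟨rad_mul_left hj i, rad_mul_right hj i⟩⟩
  rw [mul_zero]
  exact ⟨0, by simp⟩
end

section
/- The following are equivalent: (1) rad(E(R,I)) = rad(R) ⊕ rad(I); (2) I·rad(R) ⊆ rad(I); (3) rad(R)·I ⊆ rad(I). In particular, if rad(R) = 0 then rad(E(R,I)) = 0 ⊕ rad(I). -/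
open MulOpposite

section RadAux

open MulOpposite

variable {S : Type*} [NonUnitalRing S]

theorem isLQR_of_act {w u : S} (h : IsLQR (w + u + u * w)) : IsLQR w := by
  obtain ⟨m, hm⟩ := h
  refine ⟨m + u + m * u, ?_⟩
  have key : w + (m + u + m * u) + (m + u + m * u) * w
      = w + u + u * w + m + m * (w + u + u * w) := by noncomm_ring
  rw [key, hm]

theorem isLQR_swap_s9 {s y : S} (h : IsLQR (s * y)) : IsLQR (y * s) := by
  obtain ⟨k, hk⟩ := h
  refine ⟨-(y * s) - y * k * s, ?_⟩
  have key : y * s + (-(y * s) - y * k * s) + (-(y * s) - y * k * s) * (y * s)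
      = -(y * (s * y + k + k * (s * y)) * s) := by noncomm_ring
  rw [key, hk]
  simp

theorem rngRad_zero_mem : (0 : S) ∈ rngRad S := fun j => ⟨0, by simp⟩

theorem isLQR_of_mem {x : S} (h : x ∈ rngRad S) : IsLQR x := by
  obtain ⟨k, hk⟩ := h (-x)
  refine ⟨k - x - k * x, ?_⟩
  have key : x + (k - x - k * x) + (k - x - k * x) * x
      = -x * x + k + k * (-x * x) := by noncomm_ring
  rw [key, hk]

theorem rngRad_mul_mem_left {x : S} (s : S) (h : x ∈ rngRad S) : s * x ∈ rngRad S := by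
  intro j
  have hh := h (j * s)
  rwa [mul_assoc] at hh

theorem rngRad_neg_mem {x : S} (h : x ∈ rngRad S) : -x ∈ rngRad S := by
  intro j
  have hh := h (-j)
  rwa [neg_mul, ← mul_neg] at hh

theorem rngRad_mul_mem_right {x : S} (s : S) (h : x ∈ rngRad S) : x * s ∈ rngRad S := by
  intro j
  rw [← mul_assoc]
  exact isLQR_swap_s9 (by simpa [mul_assoc] using h (s * j))

theorem rngRad_add_mem {x y : S} (hx : x ∈ rngRad S) (hy : y ∈ rngRad S) :
    x + y ∈ rngRad S := by
  intro a
  obtain ⟨k, hk⟩ := hx a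
  apply isLQR_of_act (u := k)
  have key : a * (x + y) + k + k * (a * (x + y))
      = (a + k * a) * y + (a * x + k + k * (a * x)) := by noncomm_ring
  rw [key, hk, add_zero]
  exact hy (a + k * a)

end RadAux

section DorrohAux

open MulOpposite

variable {R I : Type*} [Ring R] [NonUnitalRing I] [Module R I] [Module Rᵐᵒᵖ I] [IsRRng R I]

theorem isLQR_snd_iff {z : I} : IsLQR (⟨0, z⟩ : Dorroh R I) ↔ IsLQR z := by
  constructor
  · rintro ⟨⟨k, m⟩, h⟩
    have hf := congrArg Dorroh.fst h
    have hs := congrArg Dorroh.snd h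
    simp at hf
    subst hf
    simp at hs
    exact ⟨m, by rw [← hs]⟩
  · rintro ⟨m, hm⟩
    refine ⟨⟨0, m⟩, ?_⟩
    ext
    · simp
    · simp only [Dorroh.add_snd, Dorroh.mul_snd, Dorroh.zero_fst, Dorroh.zero_snd, op_zero,
        zero_smul, zero_add, add_zero]
      rw [← hm]

theorem mem_rad_dorroh_snd {i : I} (hi : i ∈ rngRad I) :
    (⟨0, i⟩ : Dorroh R I) ∈ rngRad (Dorroh R I) := by
  rintro ⟨s, j⟩
  have hprod : (⟨s, j⟩ : Dorroh R I) * ⟨0, i⟩ = ⟨0, s • i + j * i⟩ := by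
    ext <;> simp
  rw [hprod]
  have hmem : s • i + j * i ∈ rngRad I := by
    intro a
    have key : a * (s • i + j * i) = ((op s • a) + a * j) * i := by
      rw [mul_add, IsRRng.mul_smul_eq, ← mul_assoc, ← add_mul]
    rw [key]
    exact hi _
  exact isLQR_snd_iff.mpr (isLQR_of_mem hmem)

theorem rad_dorroh_snd_mem {i : I} (h : (⟨0, i⟩ : Dorroh R I) ∈ rngRad (Dorroh R I)) :
    i ∈ rngRad I := by
  intro j
  have hh := h ⟨0, j⟩
  have hprod : (⟨0, j⟩ : Dorroh R I) * ⟨0, i⟩ = ⟨0, j * i⟩ := by ext <;> simp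
  rw [hprod] at hh
  exact isLQR_snd_iff.mp hh

theorem rad_dorroh_fst {p : Dorroh R I} (h : p ∈ rngRad (Dorroh R I)) :
    p.fst ∈ rngRad R := by
  intro j
  obtain ⟨w, hw⟩ := h ⟨j, 0⟩
  refine ⟨w.fst, ?_⟩
  have hh := congrArg Dorroh.fst hw
  simpa using hh

theorem rad_dorroh_snd {p : Dorroh R I} (h : p ∈ rngRad (Dorroh R I))
    (hC2 : ∀ r ∈ rngRad R, ∀ i : I, op r • i ∈ rngRad I) : p.snd ∈ rngRad I := by
  have hf := rad_dorroh_fst h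
  intro a
  have h1 := h ⟨0, a⟩
  have hprod : (⟨0, a⟩ : Dorroh R I) * p = ⟨0, op p.fst • a + a * p.snd⟩ := by
    ext <;> simp
  rw [hprod] at h1
  obtain ⟨k, hk⟩ := isLQR_snd_iff.mp h1
  have hum : op p.fst • a ∈ rngRad I := hC2 _ hf a
  apply isLQR_of_act (u := k)
  have key : a * p.snd + k + k * (a * p.snd)
      = (op p.fst • a + a * p.snd + k + k * (op p.fst • a + a * p.snd))
        + (-(op p.fst • a) + k * (-(op p.fst • a))) := by noncomm_ring
  rw [key, hk, zero_add]
  exact isLQR_of_mem (rngRad_add_mem (rngRad_neg_mem hum)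
    (rngRad_mul_mem_left k (rngRad_neg_mem hum)))

theorem c2_to_c3 (hC2 : ∀ r ∈ rngRad R, ∀ i : I, op r • i ∈ rngRad I) :
    ∀ r ∈ rngRad R, ∀ i : I, r • i ∈ rngRad I := by
  intro r hr i a
  rw [IsRRng.mul_smul_eq]
  exact isLQR_of_mem (rngRad_mul_mem_right i (hC2 r hr a))

theorem c3_to_c2 (hC3 : ∀ r ∈ rngRad R, ∀ i : I, r • i ∈ rngRad I) :
    ∀ r ∈ rngRad R, ∀ i : I, op r • i ∈ rngRad I := by
  intro r hr i a
  rw [← IsRRng.op_smul_mul]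
  have h1 : IsLQR ((⟨r, 0⟩ : Dorroh R I) * ⟨0, a * i⟩) := by
    have hprod : (⟨r, (0 : I)⟩ : Dorroh R I) * ⟨0, a * i⟩ = ⟨0, r • (a * i)⟩ := by
      ext <;> simp
    rw [hprod]
    exact isLQR_snd_iff.mpr (isLQR_of_mem (hC3 r hr (a * i)))
  have h2 := isLQR_swap_s9 h1
  have hprod2 : (⟨(0 : R), a * i⟩ : Dorroh R I) * ⟨r, 0⟩ = ⟨0, op r • (a * i)⟩ := by
    ext <;> simp
  rw [hprod2] at h2
  exact isLQR_snd_iff.mp h2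

theorem rad_dorroh_fst_mem {r : R} (hr : r ∈ rngRad R)
    (hC2 : ∀ r ∈ rngRad R, ∀ i : I, op r • i ∈ rngRad I)
    (hC3 : ∀ r ∈ rngRad R, ∀ i : I, r • i ∈ rngRad I) :
    (⟨r, 0⟩ : Dorroh R I) ∈ rngRad (Dorroh R I) := by
  rintro ⟨s, j⟩
  have hprod : (⟨s, j⟩ : Dorroh R I) * ⟨r, 0⟩ = ⟨s * r, op r • j⟩ := by ext <;> simp
  rw [hprod]
  have ha : s * r ∈ rngRad R := rngRad_mul_mem_left s hr
  have hx : op r • j ∈ rngRad I := hC2 r hr j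
  obtain ⟨k, hk⟩ := isLQR_of_mem ha
  have hkmem : k ∈ rngRad R := by
    have hkeq : k = -(s * r + k * (s * r)) := by
      rw [eq_neg_iff_add_eq_zero, ← hk]
      abel
    rw [hkeq]
    exact rngRad_neg_mem (rngRad_add_mem ha (rngRad_mul_mem_left k ha))
  apply isLQR_of_act (u := (⟨k, 0⟩ : Dorroh R I))
  have heq : (⟨s * r, op r • j⟩ : Dorroh R I) + ⟨k, 0⟩ + ⟨k, 0⟩ * ⟨s * r, op r • j⟩
      = ⟨s * r + k + k * (s * r), op r • j + k • (op r • j)⟩ := by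
    ext
    · simp
    · simp
  rw [heq, hk]
  exact isLQR_snd_iff.mpr (isLQR_of_mem (rngRad_add_mem hx (hC3 k hkmem _)))

end DorrohAux

variable (R I : Type*) [Ring R] [NonUnitalRing I] [Module R I] [Module Rᵐᵒᵖ I] [IsRRng R I]

open MulOpposite


/-- `rad(E(R,I)) = rad(R) ⊕ rad(I)` iff `I·rad(R) ⊆ rad(I)` iff `rad(R)·I ⊆ rad(I)`;
in particular if `rad(R) = 0` then `rad(E(R,I)) = 0 ⊕ rad(I)`. -/
theorem dorroh_rad_eq_iff :
    ((rngRad (Dorroh R I) =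
        {p : Dorroh R I | p.fst ∈ rngRad R ∧ p.snd ∈ rngRad I}) ↔
      (∀ r ∈ rngRad R, ∀ i : I, op r • i ∈ rngRad I)) ∧
    ((rngRad (Dorroh R I) =
        {p : Dorroh R I | p.fst ∈ rngRad R ∧ p.snd ∈ rngRad I}) ↔
      (∀ r ∈ rngRad R, ∀ i : I, r • i ∈ rngRad I)) ∧
    (rngRad R = {0} →
      rngRad (Dorroh R I) = {p : Dorroh R I | p.fst = 0 ∧ p.snd ∈ rngRad I}) := by
  have hzero : (0 : I) ∈ rngRad I := rngRad_zero_mem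
  have hPC2 : rngRad (Dorroh R I) =
      {p : Dorroh R I | p.fst ∈ rngRad R ∧ p.snd ∈ rngRad I} →
      ∀ r ∈ rngRad R, ∀ i : I, op r • i ∈ rngRad I := by
    intro hP r hr i
    have h1 : (⟨r, 0⟩ : Dorroh R I) ∈ rngRad (Dorroh R I) := by
      rw [hP]; exact ⟨hr, hzero⟩
    have h2 := rngRad_mul_mem_left (⟨0, i⟩ : Dorroh R I) h1
    have hprod : (⟨(0 : R), i⟩ : Dorroh R I) * ⟨r, 0⟩ = ⟨0, op r • i⟩ := by ext <;> simp
    rw [hprod, hP] at h2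
    exact h2.2
  have hPC3 : rngRad (Dorroh R I) =
      {p : Dorroh R I | p.fst ∈ rngRad R ∧ p.snd ∈ rngRad I} →
      ∀ r ∈ rngRad R, ∀ i : I, r • i ∈ rngRad I := by
    intro hP r hr i
    have h1 : (⟨r, 0⟩ : Dorroh R I) ∈ rngRad (Dorroh R I) := by
      rw [hP]; exact ⟨hr, hzero⟩
    have h2 := rngRad_mul_mem_right (⟨0, i⟩ : Dorroh R I) h1
    have hprod : (⟨r, (0 : I)⟩ : Dorroh R I) * ⟨0, i⟩ = ⟨0, r • i⟩ := by ext <;> simp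
    rw [hprod, hP] at h2
    exact h2.2
  have hC3P : (∀ r ∈ rngRad R, ∀ i : I, r • i ∈ rngRad I) →
      rngRad (Dorroh R I) = {p : Dorroh R I | p.fst ∈ rngRad R ∧ p.snd ∈ rngRad I} := by
    intro hC3
    have hC2 := c3_to_c2 hC3
    ext p
    simp only [Set.mem_setOf_eq]
    constructor
    · intro hp
      exact ⟨rad_dorroh_fst hp, rad_dorroh_snd hp hC2⟩
    · rintro ⟨h1, h2⟩
      have ha := rad_dorroh_fst_mem h1 hC2 hC3
      have hb := mem_rad_dorroh_snd (R := R) h2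
      have hp : p = ⟨p.fst, 0⟩ + ⟨0, p.snd⟩ := by ext <;> simp
      rw [hp]
      exact rngRad_add_mem ha hb
  refine ⟨⟨hPC2, fun h => hC3P (c2_to_c3 h)⟩, ⟨hPC3, hC3P⟩, ?_⟩
  intro h0
  have hC3 : ∀ r ∈ rngRad R, ∀ i : I, r • i ∈ rngRad I := by
    intro r hr i
    rw [h0, Set.mem_singleton_iff] at hr
    subst hr
    simpa using hzero
  rw [hC3P hC3]
  ext p
  simp [h0]
end

section
/- If J is an ideal of the rng I and K is the R-ideal of I generated by J, then K = RJR and K³ ⊆ J. Consequently, J is nil (respectively nilpotent) if and only if K is nil (respectively nilpotent), and the upper nil radical Nil*(I) is an R-ideal of I. -/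
open MulOpposite

section RJRAux

open MulOpposite

variable (R : Type*) {I : Type*} [Ring R] [NonUnitalRing I] [Module R I]
  [Module Rᵐᵒᵖ I] [IsRRng R I] (J : TwoSidedIdeal I)

/-- The generating set `RJR` of the `R`-ideal generated by `J`. -/
def rjrGens : Set I := {x : I | ∃ (r r' : R), ∃ j ∈ (J : Set I), x = r • op r' • j}

/-- The additive subgroup generated by `RJR`. -/
def rjrK : AddSubgroup I := AddSubgroup.closure (rjrGens R J)

theorem rjr_gens_subset_K : rjrGens R J ⊆ (rjrK R J : Set I) :=
  AddSubgroup.subset_closure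

theorem rjr_J_subset_K : (J : Set I) ⊆ (rjrK R J : Set I) := fun j hj =>
  rjr_gens_subset_K R J ⟨1, 1, j, hj, by simp⟩

theorem rjr_smul_mem (r : R) {x : I} (hx : x ∈ rjrK R J) : r • x ∈ rjrK R J := by
  refine AddSubgroup.closure_induction (fun y hy => ?_) ?_ (fun a b _ _ ha hb => ?_)
    (fun a _ ha => ?_) hx
  · obtain ⟨s, s', j, hj, rfl⟩ := hy
    exact rjr_gens_subset_K R J ⟨r * s, s', j, hj, (mul_smul r s _).symm⟩
  · rw [smul_zero]; exact zero_mem _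
  · rw [smul_add]; exact add_mem ha hb
  · rw [smul_neg]; exact neg_mem ha

theorem rjr_op_smul_mem (r : R) {x : I} (hx : x ∈ rjrK R J) : op r • x ∈ rjrK R J := by
  refine AddSubgroup.closure_induction (fun y hy => ?_) ?_ (fun a b _ _ ha hb => ?_)
    (fun a _ ha => ?_) hx
  · obtain ⟨s, s', j, hj, rfl⟩ := hy
    refine rjr_gens_subset_K R J ⟨s, s' * r, j, hj, ?_⟩
    rw [op_mul, mul_smul]
    exact (IsRRng.smul_op_smul s (op r) (op s' • j)).symm
  · rw [smul_zero]; exact zero_mem _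
  · rw [smul_add]; exact add_mem ha hb
  · rw [smul_neg]; exact neg_mem ha

theorem rjr_mul_mem_left (i : I) {x : I} (hx : x ∈ rjrK R J) : i * x ∈ rjrK R J := by
  refine AddSubgroup.closure_induction (fun y hy => ?_) ?_ (fun a b _ _ ha hb => ?_)
    (fun a _ ha => ?_) hx
  · obtain ⟨s, s', j, hj, rfl⟩ := hy
    refine rjr_gens_subset_K R J ⟨1, s', (op s • i) * j, J.mul_mem_left _ _ hj, ?_⟩
    rw [one_smul, IsRRng.mul_smul_eq, IsRRng.op_smul_mul]
  · rw [mul_zero]; exact zero_mem _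
  · rw [mul_add]; exact add_mem ha hb
  · rw [mul_neg]; exact neg_mem ha

theorem rjr_mul_mem_right (i : I) {x : I} (hx : x ∈ rjrK R J) : x * i ∈ rjrK R J := by
  refine AddSubgroup.closure_induction (fun y hy => ?_) ?_ (fun a b _ _ ha hb => ?_)
    (fun a _ ha => ?_) hx
  · obtain ⟨s, s', j, hj, rfl⟩ := hy
    refine rjr_gens_subset_K R J ⟨s, 1, j * (s' • i), J.mul_mem_right _ _ hj, ?_⟩
    rw [op_one, one_smul, IsRRng.mul_smul_eq, IsRRng.smul_mul]
  · rw [zero_mul]; exact zero_mem _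
  · rw [add_mul]; exact add_mem ha hb
  · rw [neg_mul]; exact neg_mem ha

theorem rjr_isRIdeal : IsRIdeal R ((rjrK R J : Set I)) :=
  ⟨⟨zero_mem _, fun _ hx _ hy => add_mem hx hy, fun _ hx => neg_mem hx,
    fun x _ _ hy => rjr_mul_mem_left R J x hy,
    fun r _ hx => rjr_smul_mem R J r hx, fun r _ hx => rjr_op_smul_mem R J r hx⟩,
   fun i _ hj => ⟨rjr_mul_mem_left R J i hj, rjr_mul_mem_right R J i hj⟩⟩

theorem rjr_K_subset {S : Set I} (hS : IsRIdeal R S) (hJS : (J : Set I) ⊆ S) :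
    (rjrK R J : Set I) ⊆ S := by
  intro x hx
  refine AddSubgroup.closure_induction (fun y hy => ?_) ?_ (fun a b _ _ ha hb => ?_)
    (fun a _ ha => ?_) hx
  · obtain ⟨s, s', j, hj, rfl⟩ := hy
    exact hS.1.2.2.2.2.1 s _ (hS.1.2.2.2.2.2 s' j (hJS hj))
  · exact hS.1.1
  · exact hS.1.2.1 a ha b hb
  · exact hS.1.2.2.1 a ha

theorem rjr_sInter_eq :
    (⋂₀ {S : Set I | IsRIdeal R S ∧ (J : Set I) ⊆ S}) = (rjrK R J : Set I) := by
  apply Set.Subset.antisymm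
  · exact Set.sInter_subset_of_mem ⟨rjr_isRIdeal R J, rjr_J_subset_K R J⟩
  · intro x hx S hS
    exact rjr_K_subset R J hS.1 hS.2 hx

/-- The additive subgroup generated by `RJ`. -/
def rjL : AddSubgroup I :=
  AddSubgroup.closure {z : I | ∃ s : R, ∃ m ∈ (J : Set I), z = s • m}

theorem rjr_mul_mem_L {b : I} (hb : b ∈ rjrK R J) (c : I) : b * c ∈ rjL R J := by
  refine AddSubgroup.closure_induction (fun y hy => ?_) ?_ (fun a b _ _ ha hb => ?_)
    (fun a _ ha => ?_) hb
  · obtain ⟨s, s', j, hj, rfl⟩ := hy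
    refine AddSubgroup.subset_closure ⟨s, j * (s' • c), J.mul_mem_right _ _ hj, ?_⟩
    rw [IsRRng.mul_smul_eq, IsRRng.smul_mul]
  · rw [zero_mul]; exact zero_mem _
  · rw [add_mul]; exact add_mem ha hb
  · rw [neg_mul]; exact neg_mem ha

theorem rjr_mul_L_mem {z : I} (hz : z ∈ rjL R J) (a : I) : a * z ∈ J := by
  refine AddSubgroup.closure_induction (fun y hy => ?_) ?_ (fun x y _ _ hx hy => ?_)
    (fun x _ hx => ?_) hz
  · obtain ⟨s, m, hm, rfl⟩ := hy
    rw [IsRRng.mul_smul_eq]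
    exact J.mul_mem_left _ _ hm
  · rw [mul_zero]; exact J.zero_mem
  · rw [mul_add]; exact J.add_mem hx hy
  · rw [mul_neg]; exact J.neg_mem hx

theorem rjr_triple_mem (a c : I) {b : I} (hb : b ∈ rjrK R J) : a * b * c ∈ J := by
  rw [mul_assoc]
  exact rjr_mul_L_mem R J (rjr_mul_mem_L R J hb c) a

theorem npowNZ_mul_npowNZ {I : Type*} [NonUnitalRing I] (x : I) (a b : ℕ) :
    npowNZ x a * npowNZ x b = npowNZ x (a + b + 1) := by
  induction b with
  | zero => rfl
  | succ n ih =>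
    show npowNZ x a * (npowNZ x n * x) = _
    rw [← mul_assoc, ih]
    rfl

theorem npowNZ_cube {I : Type*} [NonUnitalRing I] (x : I) (n : ℕ) :
    npowNZ (x * x * x) n = npowNZ x (3 * n + 2) := by
  induction n with
  | zero => rfl
  | succ n ih =>
    show npowNZ (x * x * x) n * (x * x * x) = _
    rw [ih, show x * x * x = npowNZ x 2 from rfl, npowNZ_mul_npowNZ,
      show 3 * n + 2 + 2 + 1 = 3 * (n + 1) + 2 by ring]

theorem isNilElem_of_cube {I : Type*} [NonUnitalRing I] {x : I}
    (h : IsNilElem (x * x * x)) : IsNilElem x := by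
  obtain ⟨n, hn⟩ := h
  exact ⟨3 * n + 2, by rw [← npowNZ_cube]; exact hn⟩

theorem setIsNilpotent_mono {I : Type*} [NonUnitalRing I] {S T : Set I} (h : S ⊆ T)
    (hT : SetIsNilpotent T) : SetIsNilpotent S := by
  obtain ⟨n, hn⟩ := hT
  exact ⟨n, fun x l hx hl hlen => hn x l (h hx) (fun y hy => h (hl y hy)) hlen⟩

theorem rjr_fold_compress (k : ℕ) :
    ∀ l : List I, (∀ y ∈ l, y ∈ rjrK R J) → l.length = 3 * k →
      ∃ l' : List I, (∀ y ∈ l', y ∈ J) ∧ l'.length = k ∧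
        ∀ x : I, l.foldl (· * ·) x = l'.foldl (· * ·) x := by
  induction k with
  | zero =>
    intro l _ hlen
    obtain rfl : l = [] := List.length_eq_zero_iff.mp (by simpa using hlen)
    exact ⟨[], by simp, rfl, fun x => rfl⟩
  | succ k ih =>
    rintro (_ | ⟨a, _ | ⟨b, _ | ⟨c, rest⟩⟩⟩) hl hlen <;>
      simp only [List.length_cons, List.length_nil] at hlen <;> try omega
    have hrest : rest.length = 3 * k := by omega
    obtain ⟨l', h1, h2, h3⟩ := ih rest (fun y hy => hl y (by simp [hy])) hrest
    refine ⟨(a * b * c) :: l', ?_, by simp [h2], fun x => ?_⟩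
    · intro y hy
      rcases List.mem_cons.mp hy with rfl | hy
      · exact rjr_triple_mem R J a c (hl b (by simp))
      · exact h1 y hy
    · simp only [List.foldl_cons]
      rw [h3, mul_assoc x a b, mul_assoc x (a * b) c]

theorem rjr_nilpotent (h : SetIsNilpotent (J : Set I)) :
    SetIsNilpotent (rjrK R J : Set I) := by
  obtain ⟨n, hn⟩ := h
  refine ⟨3 * n + 2, fun x l hx hl hlen => ?_⟩
  rcases l with _ | ⟨a, _ | ⟨b, rest⟩⟩ <;>
    simp only [List.length_cons, List.length_nil] at hlen <;> try omega
  have hrest : rest.length = 3 * n := by omega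
  obtain ⟨l', h1, h2, h3⟩ := rjr_fold_compress R J n rest
    (fun y hy => hl y (by simp [hy])) hrest
  have hx0 : x * a * b ∈ J := rjr_triple_mem R J x b (hl a (by simp))
  simp only [List.foldl_cons]
  rw [h3]
  exact hn (x * a * b) l' hx0 h1 h2

/-- The `R`-ideal generated by `J`, as a two-sided ideal of `I`. -/
def rjrKIdeal : TwoSidedIdeal I :=
  TwoSidedIdeal.mk' (rjrK R J : Set I) (zero_mem _)
    (fun hx hy => add_mem hx hy) (fun hx => neg_mem hx)
    (fun {x _} hy => rjr_mul_mem_left R J x hy)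
    (fun {_ y} hx => rjr_mul_mem_right R J y hx)

theorem mem_rjrKIdeal {x : I} : x ∈ rjrKIdeal R J ↔ x ∈ rjrK R J :=
  TwoSidedIdeal.mem_mk' _ _ _ _ _ _ _

theorem rjr_isNil_K (h : SetIsNil (J : Set I)) {x : I} (hx : x ∈ rjrK R J) :
    IsNilElem x :=
  isNilElem_of_cube (h _ (rjr_triple_mem R J x x hx))

theorem upperNil_isRIdeal (I : Type*) [NonUnitalRing I] [Module R I]
    [Module Rᵐᵒᵖ I] [IsRRng R I] : IsRIdeal R (upperNil I) := by
  set M : TwoSidedIdeal I := sSup {J : TwoSidedIdeal I | ∀ x ∈ J, IsNilElem x} with hMdef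
  have hM : upperNil I = (M : Set I) := rfl
  have key : ∀ (r r' : R), ∀ x ∈ M, r • x ∈ M ∧ op r' • x ∈ M := by
    intro r r'
    set T : TwoSidedIdeal I := TwoSidedIdeal.mk'
      {x : I | x ∈ M ∧ r • x ∈ M ∧ op r' • x ∈ M}
      (by refine ⟨M.zero_mem, ?_, ?_⟩ <;> simp [M.zero_mem])
      (fun {x y} hx hy => ⟨M.add_mem hx.1 hy.1,
        by rw [smul_add]; exact M.add_mem hx.2.1 hy.2.1,
        by rw [smul_add]; exact M.add_mem hx.2.2 hy.2.2⟩)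
      (fun {x} hx => ⟨M.neg_mem hx.1,
        by rw [smul_neg]; exact M.neg_mem hx.2.1,
        by rw [smul_neg]; exact M.neg_mem hx.2.2⟩)
      (fun {x y} hy => ⟨M.mul_mem_left _ _ hy.1,
        by rw [IsRRng.smul_mul]; exact M.mul_mem_left _ _ hy.1,
        by rw [IsRRng.op_smul_mul]; exact M.mul_mem_left _ _ hy.2.2⟩)
      (fun {x y} hx => ⟨M.mul_mem_right _ _ hx.1,
        by rw [IsRRng.smul_mul]; exact M.mul_mem_right _ _ hx.2.1,
        by rw [IsRRng.op_smul_mul]; exact M.mul_mem_right _ _ hx.1⟩)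
      with hTdef
    have hMT : M ≤ T := by
      refine sSup_le fun J0 hJ0 => ?_
      intro x hx
      have hxK : x ∈ rjrK R J0 := rjr_J_subset_K R J0 hx
      have hKnil : rjrKIdeal R J0 ∈ {J : TwoSidedIdeal I | ∀ x ∈ J, IsNilElem x} :=
        fun z hz => rjr_isNil_K R J0 hJ0 ((mem_rjrKIdeal R J0).mp hz)
      have hKM : rjrKIdeal R J0 ≤ M := le_sSup hKnil
      refine (TwoSidedIdeal.mem_mk' _ _ _ _ _ _ _).mpr
        ⟨le_sSup hJ0 hx, ?_, ?_⟩
      · exact hKM ((mem_rjrKIdeal R J0).mpr (rjr_smul_mem R J0 r hxK))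
      · exact hKM ((mem_rjrKIdeal R J0).mpr (rjr_op_smul_mem R J0 r' hxK))
    intro x hx
    have := (TwoSidedIdeal.mem_mk' _ _ _ _ _ _ _).mp (hMT hx)
    exact ⟨this.2.1, this.2.2⟩
  rw [hM]
  refine ⟨⟨M.zero_mem, fun x hx y hy => M.add_mem hx hy, fun x hx => M.neg_mem hx,
    fun x _ y hy => M.mul_mem_left x y hy,
    fun r x hx => (key r r x hx).1, fun r x hx => (key r r x hx).2⟩,
    fun i j hj => ⟨M.mul_mem_left i j hj, M.mul_mem_right j i hj⟩⟩

end RJRAux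

variable (R I : Type*) [Ring R] [NonUnitalRing I] [Module R I] [Module Rᵐᵒᵖ I] [IsRRng R I]

open MulOpposite


/-- If `J` is an ideal of `I` and `K` is the `R`-ideal of `I` generated by `J`, then
`K = RJR`, `K³ ⊆ J`, `J` is nil (resp. nilpotent) iff `K` is, and `Nil*(I)` is an
`R`-ideal of `I`. -/
theorem ridealgen_eq_RJR (J : TwoSidedIdeal I) :
    (⋂₀ {S : Set I | IsRIdeal R S ∧ (J : Set I) ⊆ S}) =
      ((AddSubgroup.closure
        {x : I | ∃ (r r' : R), ∃ j ∈ (J : Set I), x = r • op r' • j} : AddSubgroup I) : Set I) ∧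
    (∀ a ∈ ⋂₀ {S : Set I | IsRIdeal R S ∧ (J : Set I) ⊆ S},
      ∀ b ∈ ⋂₀ {S : Set I | IsRIdeal R S ∧ (J : Set I) ⊆ S},
      ∀ c ∈ ⋂₀ {S : Set I | IsRIdeal R S ∧ (J : Set I) ⊆ S}, a * b * c ∈ J) ∧
    (SetIsNil (J : Set I) ↔ SetIsNil (⋂₀ {S : Set I | IsRIdeal R S ∧ (J : Set I) ⊆ S})) ∧
    (SetIsNilpotent (J : Set I) ↔
      SetIsNilpotent (⋂₀ {S : Set I | IsRIdeal R S ∧ (J : Set I) ⊆ S})) ∧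
    IsRIdeal R (upperNil I) := by
  have hEq : (⋂₀ {S : Set I | IsRIdeal R S ∧ (J : Set I) ⊆ S}) = (rjrK R J : Set I) :=
    rjr_sInter_eq R J
  refine ⟨hEq, ?_, ?_, ?_, upperNil_isRIdeal R I⟩
  · rw [hEq]
    intro a _ b hb c _
    exact rjr_triple_mem R J a c hb
  · rw [hEq]
    constructor
    · intro h x hx
      exact rjr_isNil_K R J h hx
    · intro h x hx
      exact h x (rjr_J_subset_K R J hx)
  · rw [hEq]
    exact ⟨rjr_nilpotent R J, setIsNilpotent_mono (rjr_J_subset_K R J)⟩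
end
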